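/- Let S be a measurable space and (κ_t)_{t ≥ 1} a sequence of Markov kernels from S to S such that each κ_t satisfies a minorization condition with a common constant δ ∈ (0,1]: there are probability measures ν_t with κ_t(x, A) ≥ δ·ν_t(A) for all x ∈ S and measurable A. Let P be a Markov kernel from S to S with an invariant probability measure π (π.bind P = π), and suppose the kernels converge to P uniformly in total variation: sup_{x ∈ S} dTV(κ_t(x, ·), P(x, ·)) → 0 as t → ∞. Then the distribution of the inhomogeneous Markov chain converges to π uniformly in the initial state: sup_{x₀ ∈ S} dTV(δ_{x₀}.bind κ₁.bind κ₂ ... .bind κ_t, π) → 0 as t → ∞. -/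

import Mathlib

open MeasureTheory ProbabilityTheory

/-- The total variation distance between two measures:
`dTV(μ, ν) = sup { |μ(A) - ν(A)| : A measurable }`. -/
noncomputable def tvDist {S : Type*} [MeasurableSpace S] (μ ν : Measure S) : ℝ :=
  ⨆ A : {A : Set S // MeasurableSet A}, |(μ A).toReal - (ν A).toReal|

/-!
A kernel `κ` with `κ(x, ·) ≥ δ ν` contracts total variation by the factor `1 - δ`: for
measurable `A`, the function `x ↦ κ(x, A) - δ ν(A)` takes values in `[0, 1 - δ]`, and integrating
such a function against `μ₁ - μ₂` gives at most `(1 - δ) dTV(μ₁, μ₂)` (Hahn decomposition).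
Writing `u t` for the worst-case distance of the chain to `π` and `ε t = sup_x dTV(κ t x, P x)`,
invariance `π = πP` and the triangle inequality through `πκ_t` give
`u (t + 1) ≤ (1 - δ) u t + ε t`, and such a recursion with `ε t → 0` forces `u t → 0`.
-/

open scoped ENNReal
open Filter Topology

section TotalVariation

variable {α : Type*} [MeasurableSpace α]

lemma abs_toReal_measure_sub_le_one (μ ν : Measure α) [IsProbabilityMeasure μ]
    [IsProbabilityMeasure ν] (A : Set α) : |(μ A).toReal - (ν A).toReal| ≤ 1 :=
  abs_sub_le_of_nonneg_of_le ENNReal.toReal_nonneg measureReal_le_one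
    ENNReal.toReal_nonneg measureReal_le_one

lemma le_tvDist (μ ν : Measure α) [IsProbabilityMeasure μ] [IsProbabilityMeasure ν]
    {A : Set α} (hA : MeasurableSet A) : |(μ A).toReal - (ν A).toReal| ≤ tvDist μ ν :=
  le_ciSup (f := fun A : {A : Set α // MeasurableSet A} => |(μ A).toReal - (ν A).toReal|)
    ⟨1, by rintro _ ⟨A, rfl⟩; exact abs_toReal_measure_sub_le_one μ ν A⟩ ⟨A, hA⟩

lemma tvDist_nonneg (μ ν : Measure α) : 0 ≤ tvDist μ ν :=
  Real.iSup_nonneg fun _ => abs_nonneg _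

lemma tvDist_le_one (μ ν : Measure α) [IsProbabilityMeasure μ] [IsProbabilityMeasure ν] :
    tvDist μ ν ≤ 1 :=
  Real.iSup_le (fun A => abs_toReal_measure_sub_le_one μ ν A) zero_le_one

lemma bddAbove_range_tvDist {ι : Type*} (μ ν : ι → Measure α) [∀ i, IsProbabilityMeasure (μ i)]
    [∀ i, IsProbabilityMeasure (ν i)] : BddAbove (Set.range fun i => tvDist (μ i) (ν i)) :=
  ⟨1, by rintro _ ⟨i, rfl⟩; exact tvDist_le_one _ _⟩

lemma tvDist_comm (μ ν : Measure α) : tvDist μ ν = tvDist ν μ := by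
  simp only [tvDist, abs_sub_comm]

lemma tvDist_triangle (μ ν ρ : Measure α) [IsProbabilityMeasure μ] [IsProbabilityMeasure ν]
    [IsProbabilityMeasure ρ] : tvDist μ ρ ≤ tvDist μ ν + tvDist ν ρ :=
  Real.iSup_le (fun A => (abs_sub_le _ _ _).trans (add_le_add (le_tvDist μ ν A.2)
    (le_tvDist ν ρ A.2))) (add_nonneg (tvDist_nonneg μ ν) (tvDist_nonneg ν ρ))

lemma measure_le_add_tvDist (μ ν : Measure α) [IsProbabilityMeasure μ] [IsProbabilityMeasure ν]
    {A : Set α} (hA : MeasurableSet A) : μ A ≤ ν A + ENNReal.ofReal (tvDist μ ν) := by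
  rw [← ENNReal.ofReal_toReal (measure_ne_top μ A), ← ENNReal.ofReal_toReal (measure_ne_top ν A),
    ← ENNReal.ofReal_add ENNReal.toReal_nonneg (tvDist_nonneg μ ν)]
  gcongr
  linarith [(abs_le.mp (le_tvDist μ ν hA)).2]

lemma tvDist_le_of_forall_le_add (μ ν : Measure α) [IsFiniteMeasure μ] [IsFiniteMeasure ν]
    {ε : ℝ} (hε : 0 ≤ ε) (hμν : ∀ A, MeasurableSet A → μ A ≤ ν A + ENNReal.ofReal ε)
    (hνμ : ∀ A, MeasurableSet A → ν A ≤ μ A + ENNReal.ofReal ε) : tvDist μ ν ≤ ε := by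
  refine Real.iSup_le (fun ⟨A, hA⟩ => abs_sub_le_iff.mpr ⟨?_, ?_⟩) hε
  · have := ENNReal.toReal_le_add (hμν A hA) (measure_ne_top ν A) ENNReal.ofReal_ne_top
    rw [ENNReal.toReal_ofReal hε] at this
    linarith
  · have := ENNReal.toReal_le_add (hνμ A hA) (measure_ne_top μ A) ENNReal.ofReal_ne_top
    rw [ENNReal.toReal_ofReal hε] at this
    linarith

end TotalVariation

section Kernels

variable {α β : Type*} [MeasurableSpace α] [MeasurableSpace β]

lemma lintegral_le_lintegral_add_mul_of_forall_le_add (μ ν : Measure α) [IsFiniteMeasure μ]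
    [IsFiniteMeasure ν] {D c : ℝ≥0∞} (hD : ∀ A, MeasurableSet A → μ A ≤ ν A + D)
    {g : α → ℝ≥0∞} (hg : ∀ x, g x ≤ c) : ∫⁻ x, g x ∂μ ≤ ∫⁻ x, g x ∂ν + c * D := by
  obtain ⟨s, hs, hνμ, hμν⟩ := hahn_decomposition μ ν
  have hle_s : ν.restrict s ≤ μ.restrict s := Measure.le_iff.mpr fun t ht => by
    simpa only [Measure.restrict_apply ht] using hνμ _ (ht.inter hs) Set.inter_subset_right
  have hle_sc : μ.restrict sᶜ ≤ ν.restrict sᶜ := Measure.le_iff.mpr fun t ht => by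
    simpa only [Measure.restrict_apply ht] using hμν _ (ht.inter hs.compl) Set.inter_subset_right
  set ρ := μ.restrict s - ν.restrict s
  have hμ_s : μ.restrict s = ρ + ν.restrict s := (Measure.sub_add_cancel_of_le hle_s).symm
  have hρ : ρ Set.univ ≤ D := by
    rw [Measure.sub_apply MeasurableSet.univ hle_s]
    simpa only [Measure.restrict_apply MeasurableSet.univ, Set.univ_inter, tsub_le_iff_left]
      using hD s hs
  calc ∫⁻ x, g x ∂μ = ∫⁻ x, g x ∂(μ.restrict s) + ∫⁻ x, g x ∂(μ.restrict sᶜ) :=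
        (lintegral_add_compl g hs).symm
    _ ≤ ∫⁻ x, g x ∂ρ + (∫⁻ x, g x ∂(ν.restrict s) + ∫⁻ x, g x ∂(ν.restrict sᶜ)) := by
        rw [hμ_s, lintegral_add_measure, add_assoc]
        gcongr
    _ = ∫⁻ x, g x ∂ν + ∫⁻ x, g x ∂ρ := by
        rw [lintegral_add_compl g hs, add_comm]
    _ ≤ ∫⁻ x, g x ∂ν + c * D := by
        gcongr
        calc ∫⁻ x, g x ∂ρ ≤ ∫⁻ _, c ∂ρ := lintegral_mono hg
          _ = c * ρ Set.univ := lintegral_const c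
          _ ≤ c * D := by gcongr

lemma measure_sub_mul_le_one_sub (m ν : Measure α) [IsProbabilityMeasure m]
    [IsProbabilityMeasure ν] {r : ℝ≥0∞} (hmin : ∀ A, MeasurableSet A → r * ν A ≤ m A)
    {A : Set α} (hA : MeasurableSet A) : m A - r * ν A ≤ 1 - r := by
  have hm : m A = 1 - m Aᶜ := by simpa using prob_compl_eq_one_sub (μ := m) hA.compl
  calc m A - r * ν A ≤ 1 - r * ν Aᶜ - r * ν A := by rw [hm]; gcongr; exact hmin _ hA.compl
    _ = 1 - r := by
      rw [tsub_tsub, ← mul_add, add_comm, measure_add_measure_compl hA, measure_univ, mul_one]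

lemma lintegral_add_const_of_isProbabilityMeasure (μ : Measure α) [IsProbabilityMeasure μ]
    (f : α → ℝ≥0∞) (c : ℝ≥0∞) : ∫⁻ x, f x + c ∂μ = ∫⁻ x, f x ∂μ + c := by
  rw [lintegral_add_right _ measurable_const, lintegral_const, measure_univ, mul_one]

lemma bind_apply_le_bind_apply_add (μ : Measure α) [IsProbabilityMeasure μ] (κ η : Kernel α β)
    {A : Set β} (hA : MeasurableSet A) {c : ℝ≥0∞} (h : ∀ x, κ x A ≤ η x A + c) :
    (μ.bind κ) A ≤ (μ.bind η) A + c := by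
  rw [Measure.bind_apply hA κ.aemeasurable, Measure.bind_apply hA η.aemeasurable]
  calc ∫⁻ x, κ x A ∂μ ≤ ∫⁻ x, η x A + c ∂μ := lintegral_mono h
    _ = ∫⁻ x, η x A ∂μ + c := lintegral_add_const_of_isProbabilityMeasure μ _ c

lemma tvDist_bind_le_iSup_tvDist (μ : Measure α) [IsProbabilityMeasure μ] (κ η : Kernel α β)
    [IsMarkovKernel κ] [IsMarkovKernel η] :
    tvDist (μ.bind κ) (μ.bind η) ≤ ⨆ x, tvDist (κ x) (η x) := by
  have hsup_nonneg := Real.iSup_nonneg fun x => tvDist_nonneg (κ x) (η x)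
  have hle : ∀ x, tvDist (κ x) (η x) ≤ ⨆ x, tvDist (κ x) (η x) :=
    le_ciSup (bddAbove_range_tvDist (fun x => κ x) (fun x => η x))
  refine tvDist_le_of_forall_le_add _ _ hsup_nonneg (fun A hA => ?_) (fun A hA => ?_) <;>
    refine bind_apply_le_bind_apply_add μ _ _ hA fun x => ?_
  · exact (measure_le_add_tvDist _ _ hA).trans (by gcongr; exact hle x)
  · exact (measure_le_add_tvDist _ _ hA).trans (by gcongr; rw [tvDist_comm]; exact hle x)

lemma tvDist_bind_bind_le_of_minorization (κ : Kernel α β) [IsMarkovKernel κ] (ν : Measure β)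
    [IsProbabilityMeasure ν] {δ : ℝ} (hδ₀ : 0 ≤ δ) (hδ₁ : δ ≤ 1)
    (hmin : ∀ x A, MeasurableSet A → ENNReal.ofReal δ * ν A ≤ κ x A)
    (μ₁ μ₂ : Measure α) [IsProbabilityMeasure μ₁] [IsProbabilityMeasure μ₂] :
    tvDist (μ₁.bind κ) (μ₂.bind κ) ≤ (1 - δ) * tvDist μ₁ μ₂ := by
  suffices key : ∀ (μ μ' : Measure α) [IsProbabilityMeasure μ] [IsProbabilityMeasure μ']
      (A : Set β), MeasurableSet A → (μ.bind κ) A ≤ (μ'.bind κ) A + ENNReal.ofReal ((1 - δ) * tvDist μ μ') by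
    refine tvDist_le_of_forall_le_add _ _ (mul_nonneg (by linarith) (tvDist_nonneg μ₁ μ₂))
      (key μ₁ μ₂) ?_
    rw [tvDist_comm μ₁]
    exact key μ₂ μ₁
  intro μ μ' _ _ A hA
  set c := ENNReal.ofReal δ * ν A
  have hg : ∀ x, κ x A - c ≤ ENNReal.ofReal (1 - δ) := fun x => by
    rw [ENNReal.ofReal_sub 1 hδ₀, ENNReal.ofReal_one]
    exact measure_sub_mul_le_one_sub (κ x) ν (hmin x) hA
  have hbind : ∀ (m : Measure α) [IsProbabilityMeasure m],
      (m.bind κ) A = ∫⁻ x, (κ x A - c) ∂m + c := fun m _ => by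
    rw [Measure.bind_apply hA κ.aemeasurable, ← lintegral_add_const_of_isProbabilityMeasure]
    exact lintegral_congr fun x => (tsub_add_cancel_of_le (hmin x A hA)).symm
  calc (μ.bind κ) A = ∫⁻ x, (κ x A - c) ∂μ + c := hbind μ
    _ ≤ (∫⁻ x, (κ x A - c) ∂μ' + ENNReal.ofReal (1 - δ) * ENNReal.ofReal (tvDist μ μ')) + c := by
      gcongr
      exact lintegral_le_lintegral_add_mul_of_forall_le_add μ μ'
        (fun B hB => measure_le_add_tvDist μ μ' hB) hg
    _ = (μ'.bind κ) A + ENNReal.ofReal ((1 - δ) * tvDist μ μ') := by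
      rw [hbind μ', ENNReal.ofReal_mul (by linarith)]
      ring

lemma tvDist_bind_le_of_minorization_of_invariant (κ P : Kernel α α) [IsMarkovKernel κ]
    [IsMarkovKernel P] (ν : Measure α) [IsProbabilityMeasure ν] {δ : ℝ} (hδ₀ : 0 ≤ δ) (hδ₁ : δ ≤ 1)
    (hmin : ∀ x A, MeasurableSet A → ENNReal.ofReal δ * ν A ≤ κ x A)
    (π : Measure α) [IsProbabilityMeasure π] (hπ : π.bind P = π)
    (μ : Measure α) [IsProbabilityMeasure μ] :
    tvDist (μ.bind κ) π ≤ (1 - δ) * tvDist μ π + ⨆ x, tvDist (κ x) (P x) :=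
  calc tvDist (μ.bind κ) π = tvDist (μ.bind κ) (π.bind P) := by rw [hπ]
    _ ≤ tvDist (μ.bind κ) (π.bind κ) + tvDist (π.bind κ) (π.bind P) := tvDist_triangle _ _ _
    _ ≤ (1 - δ) * tvDist μ π + ⨆ x, tvDist (κ x) (P x) :=
      add_le_add (tvDist_bind_bind_le_of_minorization κ ν hδ₀ hδ₁ hmin μ π)
        (tvDist_bind_le_iSup_tvDist π κ P)

end Kernels

section InhomogeneousChain

variable {α : Type*} [MeasurableSpace α]

noncomputable def inhomogeneousChainLaw (κ : ℕ → Kernel α α) (μ₀ : Measure α) (t : ℕ) :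
    Measure α :=
  (List.range t).foldl (fun m i => m.bind (fun x => κ i x)) μ₀

lemma inhomogeneousChainLaw_succ (κ : ℕ → Kernel α α) (μ₀ : Measure α) (t : ℕ) :
    inhomogeneousChainLaw κ μ₀ (t + 1) = (inhomogeneousChainLaw κ μ₀ t).bind (κ t) := by
  simp [inhomogeneousChainLaw, List.range_succ]

instance isProbabilityMeasure_inhomogeneousChainLaw (κ : ℕ → Kernel α α)
    [∀ t, IsMarkovKernel (κ t)] (μ₀ : Measure α) [IsProbabilityMeasure μ₀] (t : ℕ) :
    IsProbabilityMeasure (inhomogeneousChainLaw κ μ₀ t) := by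
  induction t with
  | zero => simpa [inhomogeneousChainLaw]
  | succ t ih => rw [inhomogeneousChainLaw_succ]; infer_instance

end InhomogeneousChain

lemma tendsto_zero_of_le_mul_add {u ε : ℕ → ℝ} {r M : ℝ} (hr₀ : 0 ≤ r) (hr₁ : r < 1)
    (hu₀ : ∀ t, 0 ≤ u t) (hu : ∀ t, u t ≤ M) (hrec : ∀ t, u (t + 1) ≤ r * u t + ε t)
    (hε : Tendsto ε atTop (𝓝 0)) : Tendsto u atTop (𝓝 0) := by
  refine tendsto_order.2 ⟨fun a ha => .of_forall fun t => ha.trans_le (hu₀ t), fun η hη => ?_⟩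
  obtain ⟨T, hT⟩ := eventually_atTop.1
    (hε.eventually (gt_mem_nhds (show 0 < (1 - r) * (η / 2) by nlinarith)))
  -- once `ε ≤ (1 - r) η / 2`, the recursion keeps `u - η / 2` below a geometric sequence
  have hgeom : ∀ n, u (n + T) ≤ r ^ n * M + η / 2 := by
    intro n
    induction n with
    | zero => simpa using by linarith [hu T]
    | succ n ih =>
      rw [Nat.add_right_comm, pow_succ]
      nlinarith [hrec (n + T), hT (n + T) (by omega), mul_le_mul_of_nonneg_left ih hr₀]
  have hpow : Tendsto (fun n => r ^ n * M) atTop (𝓝 0) := by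
    simpa using (tendsto_pow_atTop_nhds_zero_of_lt_one hr₀ hr₁).mul_const M
  obtain ⟨N, hN⟩ := eventually_atTop.1 (hpow.eventually (gt_mem_nhds (half_pos hη)))
  refine eventually_atTop.2 ⟨N + T, fun t ht => ?_⟩
  obtain ⟨n, rfl⟩ : ∃ n, t = n + T := ⟨t - T, by omega⟩
  linarith [hgeom n, hN n (by omega)]

/-- **Theorem 2 (convergence of the inhomogeneous Markov chain in ALFI).** Let `(κ t)` be a
sequence of Markov kernels each satisfying a Doeblin minorization with a common constant
`δ ∈ (0,1]`, and let `P` be a Markov kernel with invariant probability measure `π`. If the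
kernels converge to `P` uniformly in total variation
(`sup_x dTV(κ t x, P x) → 0`), then the distribution of the inhomogeneous Markov chain
converges to `π` uniformly in the initial state:
`sup_{x₀} dTV(δ_{x₀} κ₀ κ₁ ⋯ κ_{t-1}, π) → 0` as `t → ∞`. -/
theorem inhomogeneous_chain_uniform_convergence_to_posterior
    {S : Type*} [MeasurableSpace S]
    (κ : ℕ → Kernel S S) [∀ t, IsMarkovKernel (κ t)]
    (ν : ℕ → Measure S) [∀ t, IsProbabilityMeasure (ν t)]
    (δ : ℝ) (hδ : δ ∈ Set.Ioc (0 : ℝ) 1)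
    (hmin : ∀ t : ℕ, ∀ x : S, ∀ A : Set S, MeasurableSet A →
      ENNReal.ofReal δ * ν t A ≤ κ t x A)
    (P : Kernel S S) [IsMarkovKernel P]
    (π : Measure S) [IsProbabilityMeasure π]
    (hπ : π.bind (fun x => P x) = π)
    (hconv : Filter.Tendsto (fun t => ⨆ x : S, tvDist (κ t x) (P x))
      Filter.atTop (nhds 0)) :
    Filter.Tendsto
      (fun t => ⨆ x₀ : S,
        tvDist ((List.range t).foldl (fun m i => m.bind (fun x => κ i x))
          (Measure.dirac x₀)) π)
      Filter.atTop (nhds 0) := by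
  obtain ⟨hδ₀, hδ₁⟩ := hδ
  change Tendsto (fun t => ⨆ x₀, tvDist (inhomogeneousChainLaw κ (.dirac x₀) t) π) atTop (𝓝 0)
  set u : ℕ → ℝ := fun t => ⨆ x₀, tvDist (inhomogeneousChainLaw κ (.dirac x₀) t) π
  set ε : ℕ → ℝ := fun t => ⨆ x, tvDist (κ t x) (P x)
  have hu₀ : ∀ t, 0 ≤ u t := fun t => Real.iSup_nonneg fun _ => tvDist_nonneg _ _
  have hε₀ : ∀ t, 0 ≤ ε t := fun t => Real.iSup_nonneg fun _ => tvDist_nonneg _ _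
  refine tendsto_zero_of_le_mul_add (r := 1 - δ) (by linarith) (by linarith) hu₀
    (fun t => Real.iSup_le (fun _ => tvDist_le_one _ _) zero_le_one)
    (fun t => Real.iSup_le (fun x₀ => ?_) (by nlinarith [hu₀ t, hε₀ t])) hconv
  rw [inhomogeneousChainLaw_succ]
  calc _ ≤ (1 - δ) * tvDist (inhomogeneousChainLaw κ (.dirac x₀) t) π + ε t :=
        tvDist_bind_le_of_minorization_of_invariant (κ t) P (ν t) hδ₀.le hδ₁ (hmin t) π hπ _
    _ ≤ (1 - δ) * u t + ε t := by
        gcongr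
        exact le_ciSup (bddAbove_range_tvDist (fun x₀ => inhomogeneousChainLaw κ (.dirac x₀) t)
          fun _ => π) x₀
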